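/- Relative Fatou theorem on the upper half-plane (singular part): let η₁ and η₂ be finite Borel measures on ℝ with η₂ ≠ 0, and write the Lebesgue decomposition η₁ = f·η₂ + η_s where f is an η₂-integrable nonnegative function and η_s is a finite Borel measure singular with respect to η₂. Let h₁ and h₂ be the Poisson integrals of η₁ and η₂. Then for η_s-almost every x₀ ∈ ℝ and every aperture c > 0, h₁(z)/h₂(z) → ∞ as z → x₀ with z in the cone Γ_c(x₀). -/

import Mathlib

open MeasureTheory Filter Topology

/-- The Poisson kernel of the upper half-plane. -/
noncomputable def halfPlanePoissonKernel (z : ℂ) (x : ℝ) : ℝ :=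
  z.im / ((z.re - x) ^ 2 + z.im ^ 2)

/-- The Poisson integral of a measure on `ℝ`. -/
noncomputable def poissonIntegral (η : Measure ℝ) (z : ℂ) : ℝ :=
  ∫ x, halfPlanePoissonKernel z x ∂η

/-- The nontangential cone of aperture `c` at `x₀`. -/
def cone (x₀ c : ℝ) : Set ℂ :=
  {z : ℂ | 0 < z.im ∧ |z.re - x₀| ≤ c * z.im}

/-!
Since `η_s ⟂ η₂`, Besicovitch differentiation gives, at `η_s`-a.e. `x₀`, that
`η₂(B(x₀, r)) = o(η_s(B(x₀, r)))` and `η_s(B(x₀, r)) ≳ r` as `r → 0`. The superlevel sets of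
`P(x₀ + iy, ·)` are balls centred at `x₀`, so by the layer-cake formula the first fact yields
`h₂(x₀ + iy) ≤ ε h_s(x₀ + iy) + O(y)`, while the second yields `h_s(x₀ + iy) ≳ 1`; hence
`h₂ = o(h_s)` along the vertical ray. On the cone `Γ_c(x₀)` the kernels `P(z, ·)` and
`P(x₀ + i Im z, ·)` agree up to the factor `2 + 2c²`, which carries this over to `h₂ = o(h_s)` on
the cone, and `h_s ≤ h₁`.
-/

open Set Metric Asymptotics ENNReal

theorem Asymptotics.IsLittleO.tendsto_div_atTop {α : Type*} {l : Filter α} {f g : α → ℝ}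
    (h : f =o[l] g) (hf : ∀ᶠ x in l, 0 < f x) (hg : ∀ᶠ x in l, 0 ≤ g x) :
    Tendsto (fun x => g x / f x) l atTop := by
  have hdiv : Tendsto (fun x => f x / g x) l (𝓝[>] 0) := by
    refine tendsto_nhdsWithin_iff.2 ⟨h.tendsto_div_nhds_zero, ?_⟩
    filter_upwards [h.def one_pos, hf, hg] with x hx hfx hgx
    rw [Real.norm_of_nonneg hfx.le, Real.norm_of_nonneg hgx, one_mul] at hx
    exact div_pos hfx (hfx.trans_le hx)
  convert hdiv.inv_tendsto_nhdsGT_zero using 1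
  funext x
  exact (inv_div (f x) (g x)).symm

lemma lintegral_ofReal_le_mul_add_of_measure_superlevel_le {α : Type*} [MeasurableSpace α]
    {μ ν : Measure α} {g : α → ℝ} (hg : 0 ≤ g) (hgm : Measurable g) {t₀ : ℝ} (ht₀ : 0 ≤ t₀)
    {c : ℝ≥0∞} (h : ∀ᵐ t ∂volume.restrict (Ioi t₀), μ {x | t ≤ g x} ≤ c * ν {x | t ≤ g x}) :
    ∫⁻ x, ENNReal.ofReal (g x) ∂μ ≤
      c * ∫⁻ x, ENNReal.ofReal (g x) ∂ν + μ univ * ENNReal.ofReal t₀ := by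
  have hν_anti : Antitone fun t => ν {x | t ≤ g x} := fun s t hst => measure_mono fun x hx =>
    hst.trans hx
  rw [lintegral_eq_lintegral_meas_le μ (ae_of_all _ hg) hgm.aemeasurable,
    lintegral_eq_lintegral_meas_le ν (ae_of_all _ hg) hgm.aemeasurable,
    ← Ioc_union_Ioi_eq_Ioi ht₀, lintegral_union measurableSet_Ioi (Ioc_disjoint_Ioi le_rfl),
    add_comm]
  gcongr
  · calc ∫⁻ t in Ioi t₀, μ {x | t ≤ g x} ≤ ∫⁻ t in Ioi t₀, c * ν {x | t ≤ g x} :=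
          lintegral_mono_ae h
      _ = c * ∫⁻ t in Ioi t₀, ν {x | t ≤ g x} := lintegral_const_mul c hν_anti.measurable
      _ ≤ c * ∫⁻ t in Ioc 0 t₀ ∪ Ioi t₀, ν {x | t ≤ g x} := by
          gcongr
          exact subset_union_right
  · calc ∫⁻ t in Ioc 0 t₀, μ {x | t ≤ g x} ≤ ∫⁻ _ in Ioc 0 t₀, μ univ :=
          lintegral_mono fun t => measure_mono (subset_univ _)
      _ = μ univ * ENNReal.ofReal t₀ := by rw [setLIntegral_const, Real.volume_Ioc, sub_zero]

section Kernel

variable {z w : ℂ}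

lemma halfPlanePoissonKernel_denom_pos (hz : 0 < z.im) (x : ℝ) :
    0 < (z.re - x) ^ 2 + z.im ^ 2 := by
  positivity

lemma halfPlanePoissonKernel_pos (hz : 0 < z.im) (x : ℝ) : 0 < halfPlanePoissonKernel z x :=
  div_pos hz (halfPlanePoissonKernel_denom_pos hz x)

lemma halfPlanePoissonKernel_le_inv_im (hz : 0 < z.im) (x : ℝ) :
    halfPlanePoissonKernel z x ≤ 1 / z.im := by
  rw [halfPlanePoissonKernel, div_le_div_iff₀ (halfPlanePoissonKernel_denom_pos hz x) hz]
  nlinarith [sq_nonneg (z.re - x)]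

lemma continuous_halfPlanePoissonKernel (hz : 0 < z.im) : Continuous (halfPlanePoissonKernel z) :=
  continuous_const.div (by fun_prop) fun x => (halfPlanePoissonKernel_denom_pos hz x).ne'

lemma integrable_halfPlanePoissonKernel (ν : Measure ℝ) [IsFiniteMeasure ν] (hz : 0 < z.im) :
    Integrable (halfPlanePoissonKernel z) ν := by
  refine (integrable_const (1 / z.im)).mono'
    (continuous_halfPlanePoissonKernel hz).aestronglyMeasurable (ae_of_all _ fun x => ?_)
  rw [Real.norm_of_nonneg (halfPlanePoissonKernel_pos hz x).le]
  exact halfPlanePoissonKernel_le_inv_im hz x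

lemma halfPlanePoissonKernel_le_mul_of_im_eq {c : ℝ} (hz : 0 < z.im) (him : z.im = w.im)
    (hre : |z.re - w.re| ≤ c * z.im) (x : ℝ) :
    halfPlanePoissonKernel z x ≤ (2 + 2 * c ^ 2) * halfPlanePoissonKernel w x := by
  have hw : 0 < w.im := him ▸ hz
  rw [halfPlanePoissonKernel, halfPlanePoissonKernel, ← him, ← mul_div_assoc,
    div_le_div_iff₀ (halfPlanePoissonKernel_denom_pos hz x)
      (him ▸ halfPlanePoissonKernel_denom_pos hw x)]
  have hsq : (z.re - w.re) ^ 2 ≤ c ^ 2 * z.im ^ 2 := by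
    rw [← sq_abs, ← mul_pow]
    exact pow_le_pow_left₀ (abs_nonneg _) hre 2
  have hdenom : (w.re - x) ^ 2 + z.im ^ 2 ≤ (2 + 2 * c ^ 2) * ((z.re - x) ^ 2 + z.im ^ 2) := by
    nlinarith [sq_nonneg (z.re - x - (z.re - w.re)), sq_nonneg (z.re - x + (z.re - w.re))]
  nlinarith

lemma setOf_le_halfPlanePoissonKernel {x₀ y t : ℝ} (hy : 0 < y) (ht : 0 < t)
    (hty : t ≤ 1 / y) :
    {x | t ≤ halfPlanePoissonKernel ⟨x₀, y⟩ x} = closedBall x₀ (√(y / t - y ^ 2)) := by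
  ext x
  have hD : 0 < (x₀ - x) ^ 2 + y ^ 2 := halfPlanePoissonKernel_denom_pos (z := ⟨x₀, y⟩) hy x
  have hr : 0 ≤ y / t - y ^ 2 := by
    rw [sub_nonneg, le_div_iff₀ ht]
    rw [le_div_iff₀ hy] at hty
    nlinarith
  rw [mem_ofPred_eq, halfPlanePoissonKernel, le_div_iff₀ hD, mem_closedBall, Real.dist_eq,
    Real.le_sqrt (abs_nonneg _) hr, sq_abs, le_sub_iff_add_le, le_div_iff₀ ht]
  ring_nf

end Kernel

section PoissonIntegral

variable {z w : ℂ} (ν : Measure ℝ)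

lemma poissonIntegral_nonneg (hz : 0 < z.im) : 0 ≤ poissonIntegral ν z :=
  integral_nonneg fun x => (halfPlanePoissonKernel_pos hz x).le

variable [IsFiniteMeasure ν]

lemma poissonIntegral_pos (hν : ν ≠ 0) (hz : 0 < z.im) : 0 < poissonIntegral ν z := by
  rw [poissonIntegral, integral_pos_iff_support_of_nonneg
    (fun x => (halfPlanePoissonKernel_pos hz x).le) (integrable_halfPlanePoissonKernel ν hz),
    Function.support_eq_univ fun x => (halfPlanePoissonKernel_pos hz x).ne']
  exact Measure.measure_univ_pos.2 hν

lemma ofReal_poissonIntegral (hz : 0 < z.im) :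
    ENNReal.ofReal (poissonIntegral ν z) = ∫⁻ x, ENNReal.ofReal (halfPlanePoissonKernel z x) ∂ν :=
  ofReal_integral_eq_lintegral_ofReal (integrable_halfPlanePoissonKernel ν hz)
    (ae_of_all _ fun x => (halfPlanePoissonKernel_pos hz x).le)

lemma poissonIntegral_mono_measure {μ : Measure ℝ} (hμν : μ ≤ ν) (hz : 0 < z.im) :
    poissonIntegral μ z ≤ poissonIntegral ν z :=
  integral_mono_measure hμν (ae_of_all _ fun x => (halfPlanePoissonKernel_pos hz x).le)
    (integrable_halfPlanePoissonKernel ν hz)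

lemma poissonIntegral_le_mul_of_im_eq {c : ℝ} (hz : 0 < z.im) (him : z.im = w.im)
    (hre : |z.re - w.re| ≤ c * z.im) :
    poissonIntegral ν z ≤ (2 + 2 * c ^ 2) * poissonIntegral ν w := by
  rw [poissonIntegral, poissonIntegral, ← integral_const_mul]
  exact integral_mono (integrable_halfPlanePoissonKernel ν hz)
    ((integrable_halfPlanePoissonKernel ν (him ▸ hz)).const_mul _)
    (halfPlanePoissonKernel_le_mul_of_im_eq hz him hre)

lemma measureReal_closedBall_div_le_poissonIntegral {x₀ y : ℝ} (hy : 0 < y) :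
    ν.real (closedBall x₀ y) / (2 * y) ≤ poissonIntegral ν ⟨x₀, y⟩ := by
  have hz : 0 < (⟨x₀, y⟩ : ℂ).im := hy
  have hball : ∀ x ∈ closedBall x₀ y, 1 / (2 * y) ≤ halfPlanePoissonKernel ⟨x₀, y⟩ x := by
    intro x hx
    rw [mem_closedBall, Real.dist_eq, abs_sub_comm] at hx
    have hsq : (x₀ - x) ^ 2 ≤ y ^ 2 := by
      rw [← sq_abs]
      exact pow_le_pow_left₀ (abs_nonneg _) hx 2
    rw [halfPlanePoissonKernel, div_le_div_iff₀ (by positivity)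
      (halfPlanePoissonKernel_denom_pos hz x)]
    dsimp only
    nlinarith
  calc ν.real (closedBall x₀ y) / (2 * y) = ∫ _ in closedBall x₀ y, 1 / (2 * y) ∂ν := by
        rw [setIntegral_const, smul_eq_mul, mul_one_div]
    _ ≤ ∫ x in closedBall x₀ y, halfPlanePoissonKernel ⟨x₀, y⟩ x ∂ν :=
        setIntegral_mono_on (integrable_const _).integrableOn
          (integrable_halfPlanePoissonKernel ν hz).integrableOn measurableSet_closedBall hball
    _ ≤ poissonIntegral ν ⟨x₀, y⟩ :=
        setIntegral_le_integral (integrable_halfPlanePoissonKernel ν hz)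
          (ae_of_all _ fun x => (halfPlanePoissonKernel_pos hz x).le)

end PoissonIntegral

lemma poissonIntegral_le_mul_add_of_measure_closedBall_le {μ ν : Measure ℝ} [IsFiniteMeasure μ]
    [IsFiniteMeasure ν] {x₀ ε r₀ y : ℝ} (hε : 0 ≤ ε) (hr₀ : 0 < r₀) (hy : 0 < y)
    (hball : ∀ r ∈ Ioc 0 r₀, μ (closedBall x₀ r) ≤ ENNReal.ofReal ε * ν (closedBall x₀ r)) :
    poissonIntegral μ ⟨x₀, y⟩ ≤ ε * poissonIntegral ν ⟨x₀, y⟩ + μ.real univ * (y / r₀ ^ 2) := by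
  have hz : 0 < (⟨x₀, y⟩ : ℂ).im := hy
  set t₀ := y / (r₀ ^ 2 + y ^ 2) with ht₀
  have ht₀_pos : 0 < t₀ := by positivity
  -- Above `t₀` the superlevel sets are empty or balls of radius in `(0, r₀]`, except at the
  -- single level `t = 1 / y`, where the set is `{x₀}`.
  have hsuper : ∀ᵐ t ∂volume.restrict (Ioi t₀), μ {x | t ≤ halfPlanePoissonKernel ⟨x₀, y⟩ x} ≤
      ENNReal.ofReal ε * ν {x | t ≤ halfPlanePoissonKernel ⟨x₀, y⟩ x} := by
    filter_upwards [ae_restrict_mem measurableSet_Ioi, Measure.ae_ne _ (1 / y)]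
      with t (ht : t₀ < t) hne
    have ht_pos : 0 < t := ht₀_pos.trans ht
    rcases hne.lt_or_gt with hlt | hgt
    · rw [setOf_le_halfPlanePoissonKernel hy ht_pos hlt.le]
      refine hball _ ⟨Real.sqrt_pos.2 ?_, (Real.sqrt_le_left hr₀.le).2 ?_⟩
      · rw [sub_pos, lt_div_iff₀ ht_pos]
        rw [lt_div_iff₀ hy] at hlt
        nlinarith
      · have : y / t < r₀ ^ 2 + y ^ 2 := by
          rw [div_lt_iff₀ ht_pos]
          rw [ht₀, div_lt_iff₀ (by positivity)] at ht
          linarith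
        linarith
    · have hempty : {x | t ≤ halfPlanePoissonKernel ⟨x₀, y⟩ x} = ∅ :=
        eq_empty_of_forall_notMem fun x hx =>
          (hx.trans (halfPlanePoissonKernel_le_inv_im hz x)).not_gt hgt
      rw [hempty, measure_empty]
      exact zero_le
  have key := lintegral_ofReal_le_mul_add_of_measure_superlevel_le
    (fun x => (halfPlanePoissonKernel_pos hz x).le)
    (continuous_halfPlanePoissonKernel hz).measurable ht₀_pos.le hsuper
  rw [← ofReal_poissonIntegral μ hz, ← ofReal_poissonIntegral ν hz, ← ofReal_measureReal,
    ← ENNReal.ofReal_mul hε, ← ENNReal.ofReal_mul measureReal_nonneg,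
    ← ENNReal.ofReal_add (mul_nonneg hε (poissonIntegral_nonneg ν hz)) (by positivity),
    ENNReal.ofReal_le_ofReal_iff (by positivity [poissonIntegral_nonneg ν hz])] at key
  refine key.trans ?_
  gcongr
  exact div_le_div_of_nonneg_left hy.le (by positivity) (by nlinarith)

lemma ae_exists_pos_eventually_le_poissonIntegral (ν : Measure ℝ) [IsFiniteMeasure ν] :
    ∀ᵐ x₀ ∂ν, ∃ κ > 0, ∀ᶠ y in 𝓝[>] (0 : ℝ), κ ≤ poissonIntegral ν ⟨x₀, y⟩ := by
  filter_upwards [Besicovitch.ae_tendsto_rnDeriv volume ν, Measure.rnDeriv_lt_top volume ν]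
    with x₀ hlim hfin
  set L := volume.rnDeriv ν x₀ + 1
  have hL : L ≠ ∞ := add_ne_top.2 ⟨hfin.ne, one_ne_top⟩
  have hL_pos : 0 < L.toReal := toReal_pos (by simp [L]) hL
  refine ⟨1 / L.toReal, by positivity, ?_⟩
  filter_upwards [hlim.eventually_lt_const (ENNReal.lt_add_right hfin.ne one_ne_zero),
    self_mem_nhdsWithin] with y hy (hy_pos : 0 < y)
  have hvol : volume (closedBall x₀ y) ≤ L * ν (closedBall x₀ y) :=
    (ENNReal.div_le_iff_le_mul (Or.inr hL) (Or.inl (measure_ne_top _ _))).1 hy.le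
  have hvol_real : 2 * y ≤ L.toReal * ν.real (closedBall x₀ y) := by
    have := toReal_mono (mul_ne_top hL (measure_ne_top _ _)) hvol
    rwa [Real.volume_closedBall, toReal_ofReal (by positivity), toReal_mul] at this
  calc 1 / L.toReal ≤ ν.real (closedBall x₀ y) / (2 * y) := by
        rw [div_le_div_iff₀ hL_pos (by positivity)]
        linarith
    _ ≤ poissonIntegral ν ⟨x₀, y⟩ := measureReal_closedBall_div_le_poissonIntegral ν hy_pos

lemma isLittleO_poissonIntegral_vertical {μ ν : Measure ℝ} [IsFiniteMeasure μ] [IsFiniteMeasure ν]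
    {x₀ κ : ℝ} (hμν : Tendsto (fun r => μ (closedBall x₀ r) / ν (closedBall x₀ r)) (𝓝[>] 0) (𝓝 0))
    (hκ : 0 < κ) (hν : ∀ᶠ y in 𝓝[>] (0 : ℝ), κ ≤ poissonIntegral ν ⟨x₀, y⟩) :
    (fun y : ℝ => poissonIntegral μ ⟨x₀, y⟩) =o[𝓝[>] 0] fun y => poissonIntegral ν ⟨x₀, y⟩ := by
  refine isLittleO_iff.2 fun ε hε => ?_
  obtain ⟨r₀, hr₀, hball⟩ : ∃ r₀ > 0, ∀ r ∈ Ioc 0 r₀,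
      μ (closedBall x₀ r) ≤ ENNReal.ofReal (ε / 2) * ν (closedBall x₀ r) := by
    obtain ⟨r₀, hr₀, hsub⟩ := mem_nhdsGT_iff_exists_Ioc_subset.1
      (hμν.eventually_lt_const (ofReal_pos.2 (half_pos hε)))
    exact ⟨r₀, hr₀, fun r hr =>
      (ENNReal.div_le_iff_le_mul (Or.inr ofReal_ne_top) (Or.inl (measure_ne_top _ _))).1
        (hsub hr).le⟩
  have htail : ∀ᶠ y in 𝓝[>] (0 : ℝ), μ.real univ * (y / r₀ ^ 2) < ε / 2 * κ := by
    have : Tendsto (fun y : ℝ => μ.real univ * (y / r₀ ^ 2)) (𝓝[>] 0) (𝓝 0) := by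
      have h : Continuous fun y : ℝ => μ.real univ * (y / r₀ ^ 2) := by fun_prop
      simpa using (h.tendsto 0).mono_left nhdsWithin_le_nhds
    exact this.eventually_lt_const (by positivity)
  filter_upwards [hν, htail, self_mem_nhdsWithin] with y hκy htail (hy : 0 < y)
  have hz : 0 < (⟨x₀, y⟩ : ℂ).im := hy
  rw [Real.norm_of_nonneg (poissonIntegral_nonneg μ hz),
    Real.norm_of_nonneg (poissonIntegral_nonneg ν hz)]
  calc poissonIntegral μ ⟨x₀, y⟩
      ≤ ε / 2 * poissonIntegral ν ⟨x₀, y⟩ + μ.real univ * (y / r₀ ^ 2) :=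
        poissonIntegral_le_mul_add_of_measure_closedBall_le (half_pos hε).le hr₀ hy hball
    _ ≤ ε / 2 * poissonIntegral ν ⟨x₀, y⟩ + ε / 2 * poissonIntegral ν ⟨x₀, y⟩ := by
        have : ε / 2 * κ ≤ ε / 2 * poissonIntegral ν ⟨x₀, y⟩ := by gcongr
        linarith
    _ = ε * poissonIntegral ν ⟨x₀, y⟩ := by ring

lemma ae_isLittleO_poissonIntegral_vertical_of_mutuallySingular {μ ν : Measure ℝ}
    [IsFiniteMeasure μ] [IsFiniteMeasure ν] (h : μ ⟂ₘ ν) :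
    ∀ᵐ x₀ ∂ν, (fun y : ℝ => poissonIntegral μ ⟨x₀, y⟩) =o[𝓝[>] 0]
      fun y => poissonIntegral ν ⟨x₀, y⟩ := by
  filter_upwards [Besicovitch.ae_tendsto_rnDeriv μ ν, (Measure.rnDeriv_eq_zero μ ν).2 h,
    ae_exists_pos_eventually_le_poissonIntegral ν] with x₀ hlim hzero ⟨κ, hκ, hν⟩
  rw [hzero, Pi.zero_apply] at hlim
  exact isLittleO_poissonIntegral_vertical hlim hκ hν

lemma tendsto_im_nhdsWithin_cone (x₀ c : ℝ) :
    Tendsto Complex.im (𝓝[cone x₀ c] (x₀ : ℂ)) (𝓝[>] 0) :=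
  tendsto_nhdsWithin_iff.2
    ⟨by simpa using (Complex.continuous_im.tendsto (x₀ : ℂ)).mono_left nhdsWithin_le_nhds,
      eventually_nhdsWithin_of_forall fun _ hz => hz.1⟩

lemma isTheta_poissonIntegral_cone_vertical (ν : Measure ℝ) [IsFiniteMeasure ν] (x₀ c : ℝ) :
    (fun z => poissonIntegral ν z) =Θ[𝓝[cone x₀ c] (x₀ : ℂ)]
      fun z => poissonIntegral ν ⟨x₀, z.im⟩ := by
  refine ⟨.of_bound (2 + 2 * c ^ 2) ?_, .of_bound (2 + 2 * c ^ 2) ?_⟩ <;>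
    filter_upwards [self_mem_nhdsWithin] with z ⟨hz, hre⟩ <;>
    rw [Real.norm_of_nonneg (poissonIntegral_nonneg ν hz),
      Real.norm_of_nonneg (poissonIntegral_nonneg (z := ⟨x₀, z.im⟩) ν hz)]
  · exact poissonIntegral_le_mul_of_im_eq ν hz rfl hre
  · exact poissonIntegral_le_mul_of_im_eq ν hz rfl (by rwa [abs_sub_comm])

theorem relative_fatou_singular_general
    (η₁ η₂ η_s : Measure ℝ) [IsFiniteMeasure η₁] [IsFiniteMeasure η₂] [IsFiniteMeasure η_s]
    (hη₂ : η₂ ≠ 0)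
    (f : ℝ → ℝ)
    (hsing : η_s.MutuallySingular η₂)
    (hdec : η₁ = η₂.withDensity (fun x => ENNReal.ofReal (f x)) + η_s) :
    ∀ᵐ x₀ : ℝ ∂η_s, ∀ c > (0 : ℝ),
      Tendsto (fun z : ℂ => poissonIntegral η₁ z / poissonIntegral η₂ z)
        (𝓝[cone x₀ c] (x₀ : ℂ)) atTop := by
  filter_upwards [ae_isLittleO_poissonIntegral_vertical_of_mutuallySingular hsing.symm]
    with x₀ hx₀ c _
  have hcone : ∀ᶠ z in 𝓝[cone x₀ c] (x₀ : ℂ), 0 < z.im :=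
    eventually_nhdsWithin_of_forall fun _ hz => hz.1
  have hs₁ : (fun z => poissonIntegral η_s z) =O[𝓝[cone x₀ c] (x₀ : ℂ)]
      fun z => poissonIntegral η₁ z := by
    refine .of_bound' (hcone.mono fun z hz => ?_)
    rw [Real.norm_of_nonneg (poissonIntegral_nonneg η_s hz),
      Real.norm_of_nonneg (poissonIntegral_nonneg η₁ hz)]
    exact poissonIntegral_mono_measure η₁ (hdec ▸ Measure.le_add_left le_rfl) hz
  have h₂₁ : (fun z => poissonIntegral η₂ z) =o[𝓝[cone x₀ c] (x₀ : ℂ)]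
      fun z => poissonIntegral η₁ z :=
    (isTheta_poissonIntegral_cone_vertical η₂ x₀ c).isBigO.trans_isLittleO
      ((hx₀.comp_tendsto (tendsto_im_nhdsWithin_cone x₀ c)).trans_isBigO
        ((isTheta_poissonIntegral_cone_vertical η_s x₀ c).isBigO_symm.trans hs₁))
  exact h₂₁.tendsto_div_atTop (hcone.mono fun z hz => poissonIntegral_pos η₂ hη₂ hz)
    (hcone.mono fun z hz => poissonIntegral_nonneg η₁ hz)

theorem relative_fatou_singular
    (η₁ η₂ η_s : Measure ℝ) [IsFiniteMeasure η₁] [IsFiniteMeasure η₂] [IsFiniteMeasure η_s]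
    (hη₂ : η₂ ≠ 0)
    (f : ℝ → ℝ) (hf_nonneg : 0 ≤ f) (hf_int : Integrable f η₂)
    (hsing : η_s.MutuallySingular η₂)
    (hdec : η₁ = η₂.withDensity (fun x => ENNReal.ofReal (f x)) + η_s) :
    ∀ᵐ x₀ : ℝ ∂η_s, ∀ c > (0 : ℝ),
      Tendsto (fun z : ℂ => poissonIntegral η₁ z / poissonIntegral η₂ z)
        (𝓝[cone x₀ c] (x₀ : ℂ)) atTop :=
  relative_fatou_singular_general η₁ η₂ η_s hη₂ f hsing hdec
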